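/- Let A be a commutative ring which is a ℤ_(p)-algebra, M a module over the polynomial ring A[X], and w : A → M an FW-derivation. Then the map sending an FW-derivation w̃ : A[X] → M extending w to the element w̃(X) is a bijection from the set of FW-derivations A[X] → M extending w to the p-torsion subgroup M[p] = {x ∈ M : p·x = 0}. -/
import Mathlib

set_option linter.unusedSectionVars false
set_option maxHeartbeats 1000000

open scoped TensorProduct

/-- The integer coefficient `(p-1)!/(i!(p-i)!) = C(p,i)/p` appearing in the polynomial `P`. -/
def fwCoeff (p i : ℕ) : ℕ := p.choose i / p

/-- The polynomial `P(a,b) = Σ_{i=1}^{p-1} ((p-1)!/(i!(p-i)!)) a^i b^{p-i}`,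
so that `p · P(a,b) = (a+b)^p - a^p - b^p`. -/
def fwP (p : ℕ) {A : Type*} [CommRing A] (a b : A) : A :=
  ∑ i ∈ Finset.Ioo 0 p, fwCoeff p i • (a ^ i * b ^ (p - i))

/-- A Frobenius–Witt derivation: `w(a+b) = w(a) + w(b) - P(a,b)·w(p·1)` and
`w(ab) = b^p·w(a) + a^p·w(b)`. -/
def IsFWDeriv (p : ℕ) {A M : Type*} [CommRing A] [AddCommGroup M] [Module A M]
    (w : A → M) : Prop :=
  (∀ a b : A, w (a + b) = w a + w b - fwP p a b • w (p : A)) ∧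
  (∀ a b : A, w (a * b) = b ^ p • w a + a ^ p • w b)

/-- `A` is a `ℤ_(p)`-algebra: every integer coprime to `p` is invertible in `A`. -/
def IsZpAlgebra (p : ℕ) (A : Type*) [CommRing A] : Prop :=
  ∀ n : ℤ, IsCoprime n (p : ℤ) → IsUnit (n : A)

section FWPLemmas
variable {p : ℕ} {A B : Type*} [CommRing A] [CommRing B]

lemma map_fwP {F : Type*} [FunLike F A B] [RingHomClass F A B] (f : F) (a b : A) :
    f (fwP p a b) = fwP p (f a) (f b) := by
  simp [fwP, map_sum, map_nsmul, map_mul, map_pow]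

lemma fwP_zero_left (b : A) : fwP p 0 b = 0 := by
  refine Finset.sum_eq_zero fun i hi => ?_
  rw [Finset.mem_Ioo] at hi
  rw [zero_pow (by omega), zero_mul, smul_zero]

lemma fwP_zero_right (a : A) : fwP p a 0 = 0 := by
  refine Finset.sum_eq_zero fun i hi => ?_
  rw [Finset.mem_Ioo] at hi
  rw [zero_pow (by omega), mul_zero, smul_zero]

lemma fwP_mul_left (c a b : A) : fwP p (c * a) (c * b) = c ^ p * fwP p a b := by
  rw [fwP, fwP, Finset.mul_sum]
  refine Finset.sum_congr rfl fun i hi => ?_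
  rw [Finset.mem_Ioo] at hi
  have hip : i + (p - i) = p := by omega
  rw [mul_pow, mul_pow, nsmul_eq_mul, nsmul_eq_mul]
  have hc : c ^ i * c ^ (p - i) = c ^ p := by rw [← pow_add, hip]
  linear_combination ((fwCoeff p i : A) * a ^ i * b ^ (p - i)) * hc

lemma p_mul_fwP (hp : p.Prime) (a b : A) :
    (p : A) * fwP p a b = (a + b) ^ p - a ^ p - b ^ p := by
  have h1 : ∀ i ∈ Finset.Ioo 0 p, (p : A) * (fwCoeff p i • (a ^ i * b ^ (p - i)))
      = a ^ i * b ^ (p - i) * (p.choose i : A) := by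
    intro i hi
    rw [Finset.mem_Ioo] at hi
    have hd : p * fwCoeff p i = p.choose i :=
      Nat.mul_div_cancel' (hp.dvd_choose_self (by omega) hi.2)
    rw [nsmul_eq_mul, ← mul_assoc, ← Nat.cast_mul, hd, mul_comm]
  have h2 : 2 ≤ p := hp.two_le
  rw [fwP, Finset.mul_sum, Finset.sum_congr rfl h1]
  have hrange : Finset.range (p + 1) = insert 0 (insert p (Finset.Ioo 0 p)) := by
    ext i
    simp only [Finset.mem_range, Finset.mem_insert, Finset.mem_Ioo]
    omega
  have := add_pow a b p
  rw [hrange, Finset.sum_insert (by simp [Finset.mem_insert, Finset.mem_Ioo]; omega),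
    Finset.sum_insert (by simp [Finset.mem_Ioo])] at this
  rw [this]
  simp [Nat.sub_self]
  ring

end FWPLemmas
section FWPUniv
variable {p : ℕ} {A B : Type*} [CommRing A] [CommRing B]
lemma fwP_cocycle4 (hp : p.Prime) (a b c d : A) :
    fwP p a b + fwP p c d + fwP p (a + b) (c + d)
      = fwP p a c + fwP p b d + fwP p (a + c) (b + d) := by
  set R := MvPolynomial (Fin 4) ℤ
  have hp0 : (p : R) ≠ 0 := by
    exact_mod_cast Nat.cast_ne_zero.mpr hp.ne_zero
  let x : Fin 4 → R := fun i => MvPolynomial.X i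
  have key : fwP p (x 0) (x 1) + fwP p (x 2) (x 3) + fwP p (x 0 + x 1) (x 2 + x 3)
      = fwP p (x 0) (x 2) + fwP p (x 1) (x 3) + fwP p (x 0 + x 2) (x 1 + x 3) := by
    apply mul_left_cancel₀ hp0
    rw [mul_add, mul_add, mul_add, mul_add, p_mul_fwP hp, p_mul_fwP hp, p_mul_fwP hp,
      p_mul_fwP hp, p_mul_fwP hp, p_mul_fwP hp]
    ring
  have := congrArg (MvPolynomial.aeval ![a, b, c, d] : R →ₐ[ℤ] A) key
  simpa [map_add, map_fwP, x, Matrix.cons_val_zero, Matrix.cons_val_one] using this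

lemma fwP_nat_sum (hp : p.Prime) :
    ∑ k ∈ Finset.range p, fwP p (k : A) 1 = (p : A) ^ (p - 1) - 1 := by
  have hp0 : (p : ℤ) ≠ 0 := by exact_mod_cast hp.ne_zero
  have key : ∑ k ∈ Finset.range p, fwP p (k : ℤ) 1 = (p : ℤ) ^ (p - 1) - 1 := by
    apply mul_left_cancel₀ hp0
    rw [Finset.mul_sum]
    have h1 : ∀ k ∈ Finset.range p, (p : ℤ) * fwP p (k : ℤ) 1
        = ((k + 1 : ℤ)) ^ p - (k : ℤ) ^ p - 1 := by
      intro k _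
      rw [p_mul_fwP hp]; ring_nf
    rw [Finset.sum_congr rfl h1]
    have h2 : ∀ k : ℕ, ((k + 1 : ℤ)) ^ p - (k : ℤ) ^ p - 1
        = (((k+1 : ℕ) : ℤ) ^ p - ((k : ℕ) : ℤ) ^ p) + (-1) := by intro k; push_cast; ring
    rw [Finset.sum_congr rfl fun k _ => h2 k, Finset.sum_add_distrib,
      Finset.sum_range_sub (fun k : ℕ => ((k : ℤ)) ^ p)]
    simp only [Finset.sum_const, Finset.card_range, nsmul_eq_mul]
    have h3 : (p : ℤ) * (p : ℤ) ^ (p - 1) = (p : ℤ) ^ p := by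
      rw [← pow_succ']; congr 1; omega
    rw [Nat.cast_zero, zero_pow hp.ne_zero, ← h3]
    ring
  have := congrArg (Int.castRingHom A) key
  rw [map_sum] at this
  simpa [map_fwP] using this

end FWPUniv
section FWGeneric
variable {p : ℕ} {B : Type*} [CommRing B]
variable {M : Type*} [AddCommGroup M] [Module B M] (v : B → M)

lemma fw_nat_mul (hv0 : v 0 = 0)
    (hAdd : ∀ a b : B, v (a + b) = v a + v b - fwP p a b • v (p : B)) (n : ℕ) (a : B) :
    v ((n : B) * a) = n • v a
      - ((∑ k ∈ Finset.range n, fwP p (k : B) 1) * a ^ p) • v (p : B) := by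
  induction n with
  | zero => simp [hv0]
  | succ n ih =>
    have h1 : ((n + 1 : ℕ) : B) * a = (n : B) * a + a := by push_cast; ring
    have h2 : fwP p ((n : B) * a) a = a ^ p * fwP p (n : B) 1 := by
      have h3 := fwP_mul_left (p := p) a ((n : B)) 1
      rw [mul_one] at h3
      rw [mul_comm ((n : B)) a, h3]
    rw [h1, hAdd, ih, h2, Finset.sum_range_succ, succ_nsmul]
    module

lemma fw_p_torsion (hp : p.Prime) (hu : IsUnit ((1 : B) - (p : B) ^ (p - 1)))
    (hv0 : v 0 = 0) (hv1 : v 1 = 0)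
    (hAdd : ∀ a b : B, v (a + b) = v a + v b - fwP p a b • v (p : B))
    (hMulP : ∀ a : B, v ((p : B) * a) = a ^ p • v (p : B) + (p : B) ^ p • v a)
    (a : B) : p • v a = 0 := by
  have h2le : 2 ≤ p := hp.two_le
  have hpp : (p : B) ^ p = (p : B) * (p : B) ^ (p - 1) := by
    rw [← pow_succ']; congr 1; omega
  have h9 : ∀ b : B, v ((p : B) * b)
      = p • v b - (((p : B) ^ (p - 1) - 1) * b ^ p) • v (p : B) := by
    intro b
    rw [fw_nat_mul v hv0 hAdd p b, fwP_nat_sum hp]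
  have e2' : v ((p : B)) = -(((p : B) ^ (p - 1) - 1) • v ((p : B))) := by
    have := h9 1
    rw [mul_one, hv1, smul_zero, one_pow, mul_one, zero_sub] at this
    exact this
  have hE : ((p : B) ^ (p - 1)) • v ((p : B)) = 0 := by
    have h4 : ((p : B) ^ (p - 1)) • v ((p : B))
        = v ((p : B)) + ((p : B) ^ (p - 1) - 1) • v ((p : B)) := by module
    rw [h4]
    nth_rewrite 1 [e2']
    exact neg_add_cancel _
  have key : (((p : B)) * (1 - (p : B) ^ (p - 1))) • v a = 0 := by
    have hthis := hMulP a
    rw [h9 a, sub_eq_iff_eq_add] at hthis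
    have h6 : p • v a - (p : B) ^ p • v a
        = a ^ p • v ((p : B)) + (((p : B) ^ (p - 1) - 1) * a ^ p) • v ((p : B)) := by
      rw [hthis]; abel
    calc (((p : B)) * (1 - (p : B) ^ (p - 1))) • v a
        = (p : B) • v a - (p : B) ^ p • v a := by rw [hpp]; module
      _ = p • v a - (p : B) ^ p • v a := by rw [Nat.cast_smul_eq_nsmul]
      _ = a ^ p • v ((p : B)) + (((p : B) ^ (p - 1) - 1) * a ^ p) • v ((p : B)) := h6
      _ = (a ^ p * (p : B) ^ (p - 1)) • v ((p : B)) := by module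
      _ = a ^ p • (((p : B) ^ (p - 1)) • v ((p : B))) := mul_smul _ _ _
      _ = 0 := by rw [hE, smul_zero]
  obtain ⟨u, hu'⟩ := hu
  have key2 : (↑u : B) • (((p : B)) • v a) = 0 := by
    rw [smul_smul, hu', mul_comm]; exact key
  have hfin : ((p : B)) • v a = 0 := by
    calc ((p : B)) • v a = ((↑u⁻¹ : B) * (↑u : B)) • (((p : B)) • v a) := by
          rw [Units.inv_mul, one_smul]
      _ = (↑u⁻¹ : B) • ((↑u : B) • (((p : B)) • v a)) := mul_smul _ _ _
      _ = 0 := by rw [key2, smul_zero]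
  rw [← Nat.cast_smul_eq_nsmul B]
  exact hfin

lemma fw_zero_of_mul {p : ℕ} {B : Type*} [CommRing B] {M : Type*} [AddCommGroup M] [Module B M]
    (v : B → M) (hp0 : p ≠ 0)
    (hMul : ∀ a b : B, v (a * b) = b ^ p • v a + a ^ p • v b) : v 0 = 0 := by
  have h := hMul 0 0
  simpa [zero_pow hp0] using h

lemma fw_one_of_mul {p : ℕ} {B : Type*} [CommRing B] {M : Type*} [AddCommGroup M] [Module B M]
    (v : B → M)
    (hMul : ∀ a b : B, v (a * b) = b ^ p • v a + a ^ p • v b) : v 1 = 0 := by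
  have := hMul 1 1
  rw [mul_one, one_pow, one_smul] at this
  exact left_eq_add.mp this

end FWGeneric

open Polynomial

section Ext
variable {p : ℕ} {A M : Type*} [CommRing A] [AddCommGroup M] [Module (Polynomial A) M]
  [Module A M] [IsScalarTower A (Polynomial A) M]

lemma smul_C_eq (a : A) (m : M) : (C a : A[X]) • m = a • m := by
  rw [← Polynomial.algebraMap_eq, algebraMap_smul]

noncomputable def Fext (p : ℕ) (w : A → M) (x : M) : ℕ → A[X] → M
  | 0, f => w (f.coeff 0)
  | (n+1), f => w (f.coeff 0) + (X ^ p : A[X]) • Fext p w x n f.divX + (f.divX ^ p) • x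
      - fwP p (C (f.coeff 0)) (X * f.divX) • w ((p : A))

variable (w : A → M) (x : M) (hp0 : p ≠ 0) (hw0 : w 0 = 0)

include hp0 hw0 in
lemma Fext_stab : ∀ n (f : A[X]), f.natDegree ≤ n → Fext p w x (n+1) f = Fext p w x n f := by
  intro n
  induction n with
  | zero =>
    intro f hf
    have hf' : f.divX = 0 := by
      rw [Polynomial.eq_C_of_natDegree_le_zero hf, divX_C]
    show _ = w (f.coeff 0)
    rw [Fext, hf']
    simp [Fext, hw0, zero_pow hp0, fwP_zero_right]
  | succ n ih =>
    intro f hf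
    have hdiv : f.divX.natDegree ≤ n := by
      rw [natDegree_divX_eq_natDegree_tsub_one]; omega
    show Fext p w x (n+2) f = Fext p w x (n+1) f
    conv_lhs => rw [Fext]
    conv_rhs => rw [Fext]
    rw [ih _ hdiv]

include hp0 hw0 in
lemma Fext_of_le : ∀ n (f : A[X]), f.natDegree ≤ n → Fext p w x n f = Fext p w x f.natDegree f := by
  intro n
  induction n with
  | zero => intro f hf; rw [Nat.le_zero.mp hf]
  | succ n ih =>
    intro f hf
    rcases Nat.lt_or_ge n f.natDegree with h | h
    · have : f.natDegree = n + 1 := by omega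
      rw [this]
    · rw [Fext_stab w x hp0 hw0 n f h, ih f h]

noncomputable def wext (p : ℕ) (w : A → M) (x : M) (f : A[X]) : M := Fext p w x f.natDegree f

include hp0 hw0 in
lemma wext_eq (f : A[X]) : wext p w x f
    = w (f.coeff 0) + (X ^ p : A[X]) • wext p w x f.divX + (f.divX ^ p) • x
      - fwP p (C (f.coeff 0)) (X * f.divX) • w ((p : A)) := by
  have h1 : wext p w x f = Fext p w x (f.natDegree + 1) f :=
    (Fext_stab w x hp0 hw0 f.natDegree f le_rfl).symm
  rw [h1, Fext, Fext_of_le w x hp0 hw0 f.natDegree f.divX natDegree_divX_le]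
  rfl

include hp0 hw0 in
lemma wext_zero : wext p w x 0 = 0 := by
  show Fext p w x (natDegree 0) 0 = 0
  rw [natDegree_zero, Fext, coeff_zero, hw0]

include hp0 hw0 in
lemma wext_C (a : A) : wext p w x (C a) = w a := by
  rw [wext_eq w x hp0 hw0, divX_C, wext_zero w x hp0 hw0, coeff_C_zero]
  rw [zero_pow hp0, mul_zero, fwP_zero_right]
  simp

include hp0 hw0 in
lemma wext_X_mul (h : A[X]) : wext p w x (X * h) = (X ^ p : A[X]) • wext p w x h + (h ^ p) • x := by
  have hc : (X * h).coeff 0 = 0 := by rw [mul_coeff_zero, coeff_X_zero, zero_mul]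
  have hd : (X * h).divX = h := by
    ext n
    rw [coeff_divX, coeff_X_mul]
  rw [wext_eq w x hp0 hw0, hc, hd, hw0, map_zero, fwP_zero_left]
  simp

include hp0 hw0 in
lemma wext_decomp (a : A) (F : A[X]) :
    wext p w x (C a + X * F)
      = w a + (X ^ p : A[X]) • wext p w x F + (F ^ p) • x
        - fwP p (C a) (X * F) • w ((p : A)) := by
  have hc : (C a + X * F).coeff 0 = a := by
    rw [coeff_add, coeff_C_zero, mul_coeff_zero, coeff_X_zero, zero_mul, add_zero]
  have hdX : (X * F).divX = F := by ext n; rw [coeff_divX, coeff_X_mul]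
  have hd : (C a + X * F).divX = F := by rw [divX_add, divX_C, zero_add, hdX]
  rw [wext_eq w x hp0 hw0, hc, hd]

include hp0 hw0 in
lemma wext_add (hp : p.Prime)
    (hAddw : ∀ a b : A, w (a + b) = w a + w b - fwP p a b • w ((p : A)))
    (hx : p • x = 0) :
    ∀ n (f g : A[X]), f.natDegree ≤ n → g.natDegree ≤ n →
      wext p w x (f + g) = wext p w x f + wext p w x g - fwP p f g • w ((p : A)) := by
  intro n
  induction n with
  | zero =>
    intro f g hf hg
    rw [Polynomial.eq_C_of_natDegree_le_zero hf, Polynomial.eq_C_of_natDegree_le_zero hg,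
      ← C_add, wext_C w x hp0 hw0, wext_C w x hp0 hw0, wext_C w x hp0 hw0, hAddw,
      show fwP p (C (f.coeff 0)) (C (g.coeff 0)) = C (fwP p (f.coeff 0) (g.coeff 0)) from
        (map_fwP (C : A →+* A[X]) _ _).symm, smul_C_eq]
  | succ n ih =>
    intro f g hf hg
    obtain ⟨a, F, rfl, hF⟩ : ∃ a F, f = C a + X * F ∧ (F : A[X]).natDegree ≤ n :=
      ⟨f.coeff 0, f.divX, by rw [add_comm]; exact (X_mul_divX_add f).symm,
        by rw [natDegree_divX_eq_natDegree_tsub_one]; omega⟩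
    obtain ⟨b, G, rfl, hG⟩ : ∃ b G, g = C b + X * G ∧ (G : A[X]).natDegree ≤ n :=
      ⟨g.coeff 0, g.divX, by rw [add_comm]; exact (X_mul_divX_add g).symm,
        by rw [natDegree_divX_eq_natDegree_tsub_one]; omega⟩
    have IH := ih F G hF hG
    have hsum : (C a + X * F) + (C b + X * G) = C (a + b) + X * (F + G) := by
      rw [map_add]; ring
    have hbin : ((F + G) ^ p : A[X]) = F ^ p + G ^ p + (p : A[X]) * fwP p F G := by
      linear_combination (-1 : A[X]) * p_mul_fwP hp F G
    have hxkill : ((p : A[X]) * fwP p F G) • x = 0 := by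
      rw [mul_comm, mul_smul, Nat.cast_smul_eq_nsmul, hx, smul_zero]
    have hkey : fwP p (C (a + b)) (X * (F + G))
        = fwP p (C a) (X * F) + fwP p (C b) (X * G)
          + fwP p (C a + X * F) (C b + X * G)
          - C (fwP p a b) - X ^ p * fwP p F G := by
      have key := fwP_cocycle4 hp (C a : A[X]) (C b) (X * F) (X * G)
      rw [map_add, mul_add,
        show (C (fwP p a b) : A[X]) = fwP p (C a) (C b) from map_fwP (C : A →+* A[X]) _ _,
        show (X ^ p : A[X]) * fwP p F G = fwP p (X * F) (X * G) from (fwP_mul_left _ _ _).symm]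
      linear_combination key
    rw [hsum, wext_decomp w x hp0 hw0, wext_decomp w x hp0 hw0, wext_decomp w x hp0 hw0,
      IH, hAddw a b, hbin, hkey, ← smul_C_eq (fwP p a b) (w ((p : A))),
      add_smul, add_smul, hxkill, add_zero]
    module

include hp0 hw0 in
lemma wext_add' (hp : p.Prime)
    (hAddw : ∀ a b : A, w (a + b) = w a + w b - fwP p a b • w ((p : A)))
    (hx : p • x = 0) (f g : A[X]) :
    wext p w x (f + g) = wext p w x f + wext p w x g - fwP p f g • w ((p : A)) :=
  wext_add w x hp0 hw0 hp hAddw hx (max f.natDegree g.natDegree) f g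
    (le_max_left _ _) (le_max_right _ _)

include hp0 hw0 in
lemma wext_C_mul (hp : p.Prime)
    (hMulw : ∀ a b : A, w (a * b) = b ^ p • w a + a ^ p • w b)
    (hpw : ∀ a : A, p • w a = 0) (c : A) :
    ∀ n (h : A[X]), h.natDegree ≤ n →
      wext p w x (C c * h) = (h ^ p) • w c + ((C c : A[X]) ^ p) • wext p w x h := by
  intro n
  induction n with
  | zero =>
    intro h hh
    rw [Polynomial.eq_C_of_natDegree_le_zero hh, ← C_mul, wext_C w x hp0 hw0,
      wext_C w x hp0 hw0, hMulw, ← C_pow, smul_C_eq, ← C_pow, smul_C_eq]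
  | succ n ih =>
    intro h hh
    obtain ⟨h0, H, rfl, hH⟩ : ∃ h0 H, h = C h0 + X * H ∧ (H : A[X]).natDegree ≤ n :=
      ⟨h.coeff 0, h.divX, by rw [add_comm]; exact (X_mul_divX_add h).symm,
        by rw [natDegree_divX_eq_natDegree_tsub_one]; omega⟩
    have IH := ih H hH
    have hprod : (C c : A[X]) * (C h0 + X * H) = C (c * h0) + X * (C c * H) := by
      rw [C_mul]; ring
    have hbin : ((C h0 + X * H : A[X])) ^ p
        = (C h0 : A[X]) ^ p + (X * H) ^ p + (p : A[X]) * fwP p (C h0) (X * H) := by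
      linear_combination (-1 : A[X]) * p_mul_fwP hp (C h0 : A[X]) (X * H)
    have hwckill : ((p : A[X]) * fwP p (C h0 : A[X]) (X * H)) • w c = 0 := by
      rw [mul_comm, mul_smul, Nat.cast_smul_eq_nsmul, hpw c, smul_zero]
    have hscal : fwP p (C (c * h0) : A[X]) (X * (C c * H))
        = (C c : A[X]) ^ p * fwP p (C h0) (X * H) := by
      rw [show (C (c * h0) : A[X]) = C c * C h0 from C_mul,
        show (X : A[X]) * (C c * H) = C c * (X * H) by ring, fwP_mul_left]
    rw [hprod, wext_decomp w x hp0 hw0, wext_decomp w x hp0 hw0, IH, hMulw c h0, hbin,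
      hscal, ← smul_C_eq (h0 ^ p) (w c), ← smul_C_eq (c ^ p) (w h0), C_pow, C_pow,
      add_smul, add_smul, hwckill, add_zero]
    module

include hp0 hw0 in
lemma wext_C_mul' (hp : p.Prime)
    (hMulw : ∀ a b : A, w (a * b) = b ^ p • w a + a ^ p • w b)
    (hpw : ∀ a : A, p • w a = 0) (c : A) (h : A[X]) :
    wext p w x (C c * h) = (h ^ p) • w c + ((C c : A[X]) ^ p) • wext p w x h :=
  wext_C_mul w x hp0 hw0 hp hMulw hpw c h.natDegree h le_rfl

include hp0 hw0 in
lemma wext_natCast : wext p w x ((p : A[X])) = w ((p : A)) := by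
  rw [← Polynomial.C_eq_natCast, wext_C w x hp0 hw0]

include hp0 hw0 in
lemma wext_p_torsion (hp : p.Prime)
    (hAddw : ∀ a b : A, w (a + b) = w a + w b - fwP p a b • w ((p : A)))
    (hMulw : ∀ a b : A, w (a * b) = b ^ p • w a + a ^ p • w b)
    (hpw : ∀ a : A, p • w a = 0) (hx : p • x = 0)
    (hu : IsUnit ((1 : A[X]) - (p : A[X]) ^ (p - 1)))
    (f : A[X]) : p • wext p w x f = 0 := by
  refine fw_p_torsion (wext p w x) hp hu (wext_zero w x hp0 hw0) ?_ ?_ ?_ f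
  · rw [← map_one (C : A →+* A[X]), wext_C w x hp0 hw0]
    have := hMulw 1 1
    rw [mul_one, one_pow, one_smul] at this
    exact left_eq_add.mp this
  · intro f g
    rw [wext_add' w x hp0 hw0 hp hAddw hx, wext_natCast w x hp0 hw0]
  · intro f
    rw [← Polynomial.C_eq_natCast, wext_C_mul' w x hp0 hw0 hp hMulw hpw,
      wext_C w x hp0 hw0]

include hp0 hw0 in
lemma wext_mul (hp : p.Prime)
    (hAddw : ∀ a b : A, w (a + b) = w a + w b - fwP p a b • w ((p : A)))
    (hMulw : ∀ a b : A, w (a * b) = b ^ p • w a + a ^ p • w b)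
    (hpw : ∀ a : A, p • w a = 0) (hx : p • x = 0)
    (hu : IsUnit ((1 : A[X]) - (p : A[X]) ^ (p - 1))) :
    ∀ n (f g : A[X]), f.natDegree ≤ n →
      wext p w x (f * g) = (g ^ p) • wext p w x f + (f ^ p) • wext p w x g := by
  intro n
  induction n with
  | zero =>
    intro f g hf
    rw [Polynomial.eq_C_of_natDegree_le_zero hf, wext_C_mul' w x hp0 hw0 hp hMulw hpw,
      wext_C w x hp0 hw0]
  | succ n ih =>
    intro f g hf
    obtain ⟨a, F, rfl, hF⟩ : ∃ a F, f = C a + X * F ∧ (F : A[X]).natDegree ≤ n :=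
      ⟨f.coeff 0, f.divX, by rw [add_comm]; exact (X_mul_divX_add f).symm,
        by rw [natDegree_divX_eq_natDegree_tsub_one]; omega⟩
    have IH := ih F g hF
    have hprod : ((C a + X * F : A[X])) * g = C a * g + X * (F * g) := by ring
    have hbin : ((C a + X * F : A[X])) ^ p
        = (C a : A[X]) ^ p + (X * F) ^ p + (p : A[X]) * fwP p (C a) (X * F) := by
      linear_combination (-1 : A[X]) * p_mul_fwP hp (C a : A[X]) (X * F)
    have hwgkill : ((p : A[X]) * fwP p (C a : A[X]) (X * F)) • wext p w x g = 0 := by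
      rw [mul_comm, mul_smul, Nat.cast_smul_eq_nsmul,
        wext_p_torsion w x hp0 hw0 hp hAddw hMulw hpw hx hu g, smul_zero]
    have hscal : fwP p ((C a : A[X]) * g) (X * (F * g))
        = g ^ p * fwP p (C a) (X * F) := by
      rw [show (C a : A[X]) * g = g * C a by ring, show (X : A[X]) * (F * g) = g * (X * F) by
        ring, fwP_mul_left]
    rw [hprod, wext_add' w x hp0 hw0 hp hAddw hx, wext_C_mul' w x hp0 hw0 hp hMulw hpw,
      wext_X_mul w x hp0 hw0, IH, wext_decomp w x hp0 hw0, hscal, hbin,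
      add_smul, add_smul, hwgkill, add_zero]
    module

end Ext

theorem fw_polynomial_extensions_bijection {A : Type*} [CommRing A]
    (p : ℕ) (hp : p.Prime) (hZp : IsZpAlgebra p A)
    (M : Type*) [AddCommGroup M] [Module (Polynomial A) M] [Module A M]
    [IsScalarTower A (Polynomial A) M]
    (w : A → M) (hw : IsFWDeriv p w) :
    Set.BijOn (fun wt : Polynomial A → M => wt Polynomial.X)
      {wt : Polynomial A → M | IsFWDeriv p wt ∧ ∀ a : A, wt (Polynomial.C a) = w a}
      {x : M | p • x = 0} := by
  classical
  have hp0 : p ≠ 0 := hp.ne_zero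
  have h2le : 2 ≤ p := hp.two_le
  have hcop : IsCoprime ((1 : ℤ) - (p : ℤ) ^ (p - 1)) ((p : ℤ)) := by
    refine ⟨1, (p : ℤ) ^ (p - 2), ?_⟩
    have hpow : (p : ℤ) ^ (p - 2) * (p : ℤ) = (p : ℤ) ^ (p - 1) := by
      rw [← pow_succ]; congr 1; omega
    linear_combination hpow
  have huA : IsUnit ((1 : A) - (p : A) ^ (p - 1)) := by
    have h1 := hZp _ hcop
    have hc : (((1 : ℤ) - (p : ℤ) ^ (p - 1) : ℤ) : A) = (1 : A) - (p : A) ^ (p - 1) := by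
      push_cast; ring
    rwa [hc] at h1
  have huAX : IsUnit ((1 : Polynomial A) - (p : Polynomial A) ^ (p - 1)) := by
    have h1 := huA.map (Polynomial.C : A →+* Polynomial A)
    have hc : (Polynomial.C ((1 : A) - (p : A) ^ (p - 1)) : Polynomial A)
        = (1 : Polynomial A) - (p : Polynomial A) ^ (p - 1) := by
      rw [map_sub, map_one, map_pow, Polynomial.C_eq_natCast]
    rwa [hc] at h1
  have hw0 : w 0 = 0 := fw_zero_of_mul w hp0 hw.2
  have hw1 : w 1 = 0 := fw_one_of_mul w hw.2
  have hpw : ∀ a : A, p • w a = 0 := by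
    intro a
    exact fw_p_torsion w hp huA hw0 hw1 hw.1 (fun b => hw.2 ((p : A)) b) a
  refine ⟨?_, ?_, ?_⟩
  · -- MapsTo
    intro wt hwt
    obtain ⟨hfw, hext⟩ := hwt
    show p • wt Polynomial.X = 0
    exact fw_p_torsion wt hp huAX (fw_zero_of_mul wt hp0 hfw.2) (fw_one_of_mul wt hfw.2)
      hfw.1 (fun b => hfw.2 ((p : Polynomial A)) b) Polynomial.X
  · -- InjOn
    intro wt1 h1 wt2 h2 hXeq
    obtain ⟨hfw1, hext1⟩ := h1
    obtain ⟨hfw2, hext2⟩ := h2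
    simp only at hXeq
    have e1 : wt1 ((p : Polynomial A)) = w ((p : A)) := by
      rw [← Polynomial.C_eq_natCast]; exact hext1 _
    have e2 : wt2 ((p : Polynomial A)) = w ((p : A)) := by
      rw [← Polynomial.C_eq_natCast]; exact hext2 _
    funext f
    induction f using Polynomial.induction_on with
    | C a => rw [hext1, hext2]
    | add f g ihf ihg => rw [hfw1.1 f g, hfw2.1 f g, ihf, ihg, e1, e2]
    | monomial n a ih =>
      have hrw : (Polynomial.C a : Polynomial A) * Polynomial.X ^ (n + 1)
          = (Polynomial.C a * Polynomial.X ^ n) * Polynomial.X := by ring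
      rw [hrw, hfw1.2, hfw2.2, ih, hXeq]
  · -- SurjOn
    intro x hx
    have hx' : p • x = 0 := hx
    refine ⟨wext p w x, ⟨⟨?_, ?_⟩, ?_⟩, ?_⟩
    · intro f g
      rw [wext_natCast w x hp0 hw0]
      exact wext_add' w x hp0 hw0 hp hw.1 hx' f g
    · intro f g
      exact wext_mul w x hp0 hw0 hp hw.1 hw.2 hpw hx' huAX f.natDegree f g le_rfl
    · intro a
      exact wext_C w x hp0 hw0 a
    · show wext p w x Polynomial.X = x
      have h1 : wext p w x (Polynomial.X * 1) = (Polynomial.X ^ p : Polynomial A) • wext p w x 1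
          + ((1 : Polynomial A) ^ p) • x := wext_X_mul w x hp0 hw0 1
      have h2 : wext p w x (1 : Polynomial A) = 0 := by
        rw [← map_one (Polynomial.C : A →+* Polynomial A), wext_C w x hp0 hw0, hw1]
      rw [mul_one] at h1
      rw [h1, h2, smul_zero, zero_add, one_pow, one_smul]
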